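/- The number of Łukasiewicz paths of length n with no flat step at positive height equals the n-th Motzkin number. Equivalently, the generating function B(x) of such paths satisfies B(x) = (1 − x − √(1 − 2x − 3x²))/(2x²). -/

import Mathlib

/-- A Łukasiewicz path: vertical step components, each `≥ -1`, all partial sums
nonnegative, total sum `0`. -/
def IsLukas (w : List ℤ) : Prop :=
  (∀ s ∈ w, -1 ≤ s) ∧ (∀ k, 0 ≤ (w.take k).sum) ∧ w.sum = 0

/-- No flat step at positive height: every flat step starts at ordinate `0`. -/
def NoFlatAtPosHeight (w : List ℤ) : Prop :=
  ∀ j : ℕ, w[j]? = some 0 → (w.take j).sum = 0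

/-- Motzkin numbers: `M 0 = 1`, `M (n+1) = M n + Σ_{k=0}^{n-1} M k * M (n-1-k)`. -/
def motzkin : ℕ → ℕ
  | 0 => 1
  | n + 1 => motzkin n + ∑ k ∈ (Finset.range n).attach,
      motzkin k.1 * motzkin (n - 1 - k.1)
decreasing_by
  · exact Nat.lt_succ_self n
  · have := Finset.mem_range.mp k.2; omega
  · omega

/-!
Write `IsLukWalk S h w` for a Łukasiewicz walk from height `h` down to `0` whose flat steps
start at heights in `S`; the paths counted are the walks from `0` with `S = {0}`. Such a path of
length `n + 1` is either a flat step followed by a counted path of length `n`, or an arch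
`(c + 1) :: p' ++ -1 :: q` with `q` counted and `p'` a flat-free walk from `c + 1` to `1` staying
at height `≥ 1`. Turning the flat steps of a counted path `p` into down steps maps the counted
paths with `c` flat steps bijectively onto these `p'`: the inverse turns a down step back into a
flat step exactly when it would otherwise go below `0`. So the counts obey the Motzkin recurrence.
-/
def IsLukWalk (S : Set ℤ) : ℤ → List ℤ → Prop
  | h, [] => h = 0
  | h, s :: w => -1 ≤ s ∧ 0 ≤ h + s ∧ (s = 0 → h ∈ S) ∧ IsLukWalk S (h + s) w

namespace IsLukWalk

variable {S : Set ℤ}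

@[simp] theorem nil_iff {h : ℤ} : IsLukWalk S h [] ↔ h = 0 := Iff.rfl

@[simp] theorem cons_iff {h s : ℤ} {w : List ℤ} :
    IsLukWalk S h (s :: w) ↔ -1 ≤ s ∧ 0 ≤ h + s ∧ (s = 0 → h ∈ S) ∧ IsLukWalk S (h + s) w :=
  Iff.rfl

theorem iff_prefix_sums {h : ℤ} (hh : 0 ≤ h) {w : List ℤ} :
    IsLukWalk S h w ↔ (∀ s ∈ w, -1 ≤ s) ∧ (∀ k, 0 ≤ h + (w.take k).sum) ∧ h + w.sum = 0 ∧
      ∀ j, w[j]? = some 0 → h + (w.take j).sum ∈ S := by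
  induction w generalizing h with
  | nil => simp [hh]
  | cons s w ih =>
    have forall_succ {P : ℕ → Prop} : (∀ k, P k) ↔ P 0 ∧ ∀ k, P (k + 1) :=
      ⟨fun hP => ⟨hP 0, fun k => hP (k + 1)⟩, fun hP k => k.casesOn hP.1 hP.2⟩
    rw [forall_succ (P := fun k => 0 ≤ h + ((s :: w).take k).sum),
      forall_succ (P := fun j => (s :: w)[j]? = some 0 → h + ((s :: w).take j).sum ∈ S)]
    simp only [cons_iff, List.mem_cons, forall_eq_or_imp, List.take_succ_cons, List.sum_cons,
      List.getElem?_cons_succ, List.getElem?_cons_zero, Option.some.injEq, List.take_zero,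
      List.sum_nil, add_zero, ← add_assoc]
    constructor
    · rintro ⟨hs, hhs, hflat, hw⟩
      obtain ⟨h1, h2, h3, h4⟩ := (ih hhs).1 hw
      exact ⟨⟨hs, h1⟩, ⟨hh, h2⟩, h3, hflat, h4⟩
    · rintro ⟨⟨hs, h1⟩, ⟨-, h2⟩, h3, hflat, h4⟩
      have hhs : 0 ≤ h + s := by simpa using h2 0
      exact ⟨hs, hhs, hflat, (ih hhs).2 ⟨h1, h2, h3, h4⟩⟩

end IsLukWalk

theorem isLukWalk_append_down {h : ℤ} {m q : List ℤ} (hm : IsLukWalk ∅ h m)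
    (hq : IsLukWalk {0} 0 q) : IsLukWalk {0} (h + 1) (m ++ -1 :: q) := by
  induction m generalizing h with
  | nil => simpa [IsLukWalk.nil_iff.mp hm] using hq
  | cons s m ih =>
    obtain ⟨hs, hhs, hflat, hm⟩ := hm
    refine ⟨hs, by omega, fun h0 => (hflat h0).elim, ?_⟩
    simpa [add_right_comm] using ih hm

theorem exists_append_down_of_isLukWalk {h : ℤ} (hh : 0 ≤ h) {w : List ℤ}
    (hw : IsLukWalk {0} (h + 1) w) :
    ∃ m q, w = m ++ -1 :: q ∧ IsLukWalk ∅ h m ∧ IsLukWalk {0} 0 q := by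
  induction w generalizing h with
  | nil => exact absurd (IsLukWalk.nil_iff.mp hw) (by omega)
  | cons s w ih =>
    obtain ⟨hs, hhs, hflat, hw⟩ := hw
    by_cases hret : h + 1 + s = 0
    · obtain ⟨rfl, rfl⟩ : h = 0 ∧ s = -1 := by omega
      exact ⟨[], w, rfl, rfl, by simpa using hw⟩
    · have hs0 : s ≠ 0 := fun h0 => by have := hflat h0; simp at this; omega
      obtain ⟨m, q, rfl, hm, hq⟩ :=
        ih (h := h + s) (by omega) (by rwa [add_right_comm] at hw)
      exact ⟨s :: m, q, rfl, ⟨hs, by omega, fun h0 => absurd h0 hs0, hm⟩, hq⟩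

theorem eq_of_append_down_eq {h : ℤ} {m m' q q' : List ℤ} (hm : IsLukWalk ∅ h m)
    (hm' : IsLukWalk ∅ h m') (heq : m ++ -1 :: q = m' ++ -1 :: q') : m = m' ∧ q = q' := by
  induction m generalizing h m' with
  | nil =>
    cases m' with
    | nil => simpa using heq
    | cons s' m' =>
      obtain ⟨rfl, -⟩ := List.cons.inj heq
      have := hm'.2.1
      simp only [IsLukWalk.nil_iff.mp hm] at this
      omega
  | cons s m ih =>
    cases m' with
    | nil =>
      obtain ⟨rfl, -⟩ := List.cons.inj heq
      have := hm.2.1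
      simp only [IsLukWalk.nil_iff.mp hm'] at this
      omega
    | cons s' m' =>
      obtain ⟨rfl, htail⟩ := List.cons.inj heq
      obtain ⟨rfl, rfl⟩ := ih hm.2.2.2 hm'.2.2.2 htail
      exact ⟨rfl, rfl⟩

def flatToDown (p : List ℤ) : List ℤ := p.map fun s => if s = 0 then -1 else s

/-- `h` is the current height of the walk being produced. -/
def downToFlat : ℤ → List ℤ → List ℤ
  | _, [] => []
  | h, s :: m => if s = -1 ∧ h = 0 then 0 :: downToFlat 0 m else s :: downToFlat (h + s) m

theorem isLukWalk_flatToDown {h : ℤ} {p : List ℤ} (hp : IsLukWalk {0} h p) :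
    IsLukWalk ∅ (h + p.count 0) (flatToDown p) := by
  induction p generalizing h with
  | nil => simpa [flatToDown] using hp
  | cons s p ih =>
    obtain ⟨hs, hhs, hflat, hp⟩ := hp
    have ih := ih hp
    by_cases hs0 : s = 0
    · obtain rfl : h = 0 := hflat hs0
      subst hs0
      refine ⟨le_rfl, ?_, by simp, ?_⟩ <;> simp_all [flatToDown]
    · have hp' : IsLukWalk ∅ (h + s + p.count 0) (flatToDown p) := ih
      simp only [flatToDown, List.map_cons, hs0, ite_false, List.count_cons, beq_iff_eq,
        add_zero] at hp' ⊢
      exact ⟨hs, by omega, fun h0 => absurd h0 hs0, by rwa [add_right_comm]⟩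

theorem downToFlat_flatToDown {h : ℤ} {p : List ℤ} (hp : IsLukWalk {0} h p) :
    downToFlat h (flatToDown p) = p := by
  induction p generalizing h with
  | nil => rfl
  | cons s p ih =>
    obtain ⟨hs, hhs, hflat, hp⟩ := hp
    by_cases hs0 : s = 0
    · obtain rfl : h = 0 := hflat hs0
      subst hs0
      simpa [flatToDown, downToFlat] using ih hp
    · have : ¬(s = -1 ∧ h = 0) := by omega
      simpa [flatToDown, downToFlat, hs0, this] using ih hp

theorem flatToDown_downToFlat {H : ℤ} {m : List ℤ} (hm : IsLukWalk ∅ H m) (h : ℤ) :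
    flatToDown (downToFlat h m) = m := by
  induction m generalizing H h with
  | nil => rfl
  | cons s m ih =>
    obtain ⟨-, -, hflat, hm⟩ := hm
    have hs0 : s ≠ 0 := hflat
    by_cases hdown : s = -1 ∧ h = 0
    · obtain ⟨rfl, rfl⟩ := hdown
      simpa [flatToDown, downToFlat] using ih hm 0
    · simpa [flatToDown, downToFlat, hdown, hs0] using ih hm (h + s)

/-- The height `h` of the decoded walk never exceeds the height `H` of `m`, and the gap
`H - h` drops by one exactly at the flat steps produced. -/
theorem isLukWalk_downToFlat {H h : ℤ} {m : List ℤ} (hm : IsLukWalk ∅ H m) (hh : 0 ≤ h)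
    (hhH : h ≤ H) :
    IsLukWalk {0} h (downToFlat h m) ∧ ((downToFlat h m).count 0 : ℤ) = H - h := by
  induction m generalizing H h with
  | nil => simp_all [downToFlat]; omega
  | cons s m ih =>
    obtain ⟨hs, hHs, hflat, hm⟩ := hm
    have hs0 : s ≠ 0 := hflat
    by_cases hdown : s = -1 ∧ h = 0
    · obtain ⟨rfl, rfl⟩ := hdown
      obtain ⟨hp, hcount⟩ := ih hm le_rfl hHs
      simp only [downToFlat, and_self, ite_true, List.count_cons_self]
      exact ⟨⟨by norm_num, le_rfl, fun _ => rfl, hp⟩, by push_cast; omega⟩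
    · obtain ⟨hp, hcount⟩ := ih hm (h := h + s) (by omega) (by omega)
      simp only [downToFlat, hdown, ite_false, List.count_cons, beq_iff_eq, hs0]
      exact ⟨⟨hs, by omega, fun h0 => absurd h0 hs0, hp⟩, by push_cast; omega⟩

def arch (p q : List ℤ) : List ℤ := ((p.count 0 : ℤ) + 1) :: (flatToDown p ++ -1 :: q)

@[simp] theorem length_arch (p q : List ℤ) : (arch p q).length = p.length + q.length + 2 := by
  simp [arch, flatToDown, add_assoc]

theorem isLukWalk_arch {p q : List ℤ} (hp : IsLukWalk {0} 0 p) (hq : IsLukWalk {0} 0 q) :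
    IsLukWalk {0} 0 (arch p q) := by
  have hc : (0 : ℤ) ≤ p.count 0 := by positivity
  refine ⟨by omega, by omega, fun h0 => by omega, ?_⟩
  simpa using isLukWalk_append_down (isLukWalk_flatToDown hp) hq

theorem exists_eq_arch {s : ℤ} {r : List ℤ} (hw : IsLukWalk {0} 0 (s :: r)) (hs0 : s ≠ 0) :
    ∃ p q, IsLukWalk {0} 0 p ∧ IsLukWalk {0} 0 q ∧ s :: r = arch p q := by
  obtain ⟨-, hs, -, hr⟩ := hw
  obtain ⟨m, q, rfl, hm, hq⟩ :=
    exists_append_down_of_isLukWalk (h := s - 1) (by omega) (by simpa using hr)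
  obtain ⟨hp, hcount⟩ := isLukWalk_downToFlat hm le_rfl (by omega)
  refine ⟨downToFlat 0 m, q, hp, hq, ?_⟩
  rw [arch, flatToDown_downToFlat hm, hcount]
  simp

theorem arch_inj {p p' q q' : List ℤ} (hp : IsLukWalk {0} 0 p) (hp' : IsLukWalk {0} 0 p')
    (heq : arch p q = arch p' q') : p = p' ∧ q = q' := by
  obtain ⟨hcount, htail⟩ := List.cons.inj heq
  have hcount : (p.count 0 : ℤ) = p'.count 0 := by omega
  have hdown := isLukWalk_flatToDown hp
  rw [hcount] at hdown
  obtain ⟨hflat, rfl⟩ := eq_of_append_down_eq hdown (isLukWalk_flatToDown hp') htail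
  refine ⟨?_, rfl⟩
  rw [← downToFlat_flatToDown hp, ← downToFlat_flatToDown hp', hflat]

def goodWalks (n : ℕ) : Set (List ℤ) := {w | IsLukWalk {0} 0 w ∧ w.length = n}

def consOrArch (n : ℕ) :
    goodWalks n ⊕ (Σ k : Fin n, goodWalks k × goodWalks (n - 1 - k)) → goodWalks (n + 1)
  | .inl w => ⟨0 :: w, by simpa [goodWalks] using w.2⟩
  | .inr ⟨k, p, q⟩ => ⟨arch p q, isLukWalk_arch p.2.1 q.2.1, by
      simp only [length_arch, p.2.2, q.2.2]; omega⟩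

theorem consOrArch_injective (n : ℕ) : Function.Injective (consOrArch n) := by
  rintro (w | ⟨k, p, q⟩) (w' | ⟨k', p', q'⟩) heq <;>
    replace heq := congrArg Subtype.val heq <;>
    simp only [consOrArch] at heq
  · simp [Subtype.ext (List.cons.inj heq).2]
  · simp [arch] at heq; omega
  · simp [arch] at heq; omega
  · obtain ⟨hp, hq⟩ := arch_inj p.2.1 p'.2.1 heq
    obtain rfl : k = k' := Fin.ext (by rw [← p.2.2, ← p'.2.2, hp])
    simp [Subtype.ext hp, Subtype.ext hq]

theorem consOrArch_surjective (n : ℕ) : Function.Surjective (consOrArch n) := by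
  rintro ⟨_ | ⟨s, r⟩, hw, hlen⟩
  · simp at hlen
  by_cases hs0 : s = 0
  · subst hs0
    exact ⟨.inl ⟨r, by simpa using hw, by simpa using hlen⟩, rfl⟩
  · obtain ⟨p, q, hp, hq, hpq⟩ := exists_eq_arch hw hs0
    have hlen' : p.length + q.length + 1 = n := by simpa [hpq] using hlen
    refine ⟨.inr ⟨⟨p.length, by omega⟩, ⟨p, hp, rfl⟩, ⟨q, hq, by simp; omega⟩⟩, ?_⟩
    simp [consOrArch, hpq]

theorem finite_goodWalks (n : ℕ) : (goodWalks n).Finite := by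
  induction n using Nat.strong_induction_on with
  | _ n ih =>
    cases n with
    | zero => exact (Set.finite_singleton []).subset fun w hw => by simpa using hw.2
    | succ n =>
      have : ∀ k : Fin n, Finite (goodWalks k × goodWalks (n - 1 - k)) := fun k =>
        have := (ih k (by omega)).to_subtype
        have := (ih (n - 1 - k) (by omega)).to_subtype
        inferInstance
      have := (ih n (by omega)).to_subtype
      exact Set.finite_coe_iff.mp (Finite.of_surjective _ (consOrArch_surjective n))

theorem motzkin_succ (n : ℕ) :
    motzkin (n + 1) = motzkin n + ∑ k ∈ Finset.range n, motzkin k * motzkin (n - 1 - k) := by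
  rw [motzkin, Finset.sum_attach (Finset.range n) fun k => motzkin k * motzkin (n - 1 - k)]

theorem ncard_goodWalks (n : ℕ) : (goodWalks n).ncard = motzkin n := by
  have := fun k => (finite_goodWalks k).to_subtype
  induction n using Nat.strong_induction_on with
  | _ n ih =>
    cases n with
    | zero =>
      have : goodWalks 0 = {[]} := by ext w; simp +contextual [goodWalks, List.length_eq_zero_iff]
      simp [this, motzkin]
    | succ n =>
      rw [← Nat.card_coe_set_eq,
        ← Nat.card_congr (Equiv.ofBijective _ ⟨consOrArch_injective n, consOrArch_surjective n⟩),
        Nat.card_sum, Nat.card_sigma, motzkin_succ, ← Fin.sum_univ_eq_sum_range]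
      simp only [Nat.card_prod, Nat.card_coe_set_eq]
      rw [ih n (by omega)]
      congr 1
      refine Finset.sum_congr rfl fun k _ => ?_
      rw [ih k (by omega), ih (n - 1 - k) (by omega)]

theorem isLukWalk_iff_isLukas_and_noFlatAtPosHeight {w : List ℤ} :
    IsLukWalk {0} 0 w ↔ IsLukas w ∧ NoFlatAtPosHeight w := by
  simp only [IsLukWalk.iff_prefix_sums le_rfl, zero_add, Set.mem_singleton_iff, IsLukas,
    NoFlatAtPosHeight, and_assoc]

theorem lukas_no_flat_pos_height_card (n : ℕ) :
    Set.ncard {w : List ℤ | IsLukas w ∧ NoFlatAtPosHeight w ∧ w.length = n} =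
      motzkin n := by
  rw [← ncard_goodWalks]
  congr 1
  ext w
  simp [goodWalks, isLukWalk_iff_isLukas_and_noFlatAtPosHeight, and_assoc]
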